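/- Let G be a finite simple graph with maximum degree at most Δ (Δ ≥ 1), and let H be a finite simple d-regular graph on n vertices with adjacency matrix A_H satisfying |pᵀ A_H p| ≤ λ·‖p‖² for every p ∈ ℝ^n orthogonal to the all-ones vector, where 0 < λ < d/4 and d ≥ 2λΔ. Then IS(G ⊗ H) = n · IS(G); equivalently, rel-IS(G ⊗ H) = rel-IS(G). -/

import Mathlib

open Matrix

/-- The tensor (Kronecker) product of two simple graphs. -/
def tensorProd {V U : Type*} (G : SimpleGraph V) (H : SimpleGraph U) :
    SimpleGraph (V × U) where
  Adj a b := G.Adj a.1 b.1 ∧ H.Adj a.2 b.2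
  symm := ⟨fun _ _ h => ⟨h.1.symm, h.2.symm⟩⟩
  loopless := ⟨fun _ h => G.irrefl h.1⟩

/-- `I` is an independent set of `G`: no two of its vertices are adjacent. -/
def IsIndepSet {V : Type*} (G : SimpleGraph V) (I : Finset V) : Prop :=
  ∀ u ∈ I, ∀ v ∈ I, ¬ G.Adj u v

/-- `IS(G)`: the maximum size of an independent set of `G`. -/
noncomputable def indepNum (V : Type*) [Fintype V] (G : SimpleGraph V) : ℕ :=
  sSup {k | ∃ I : Finset V, IsIndepSet G I ∧ I.card = k}

/-!
Let `J` be an independent set of `G ⊗ H` and `S v ⊆ U` its fibre over `v`. Fibres over adjacent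
vertices span no edge of `H`, so the expander mixing lemma gives
`d² |S v| |S w| ≤ λ² (n - |S v|) (n - |S w|)`. Hence the heavy vertices, those with
`|S v| > λ n / d`, are independent in `G`; extend them to a maximal independent set `I` and charge
every vertex outside `I` to a neighbour in `I`. A vertex of `I` together with the at most `Δ` light
vertices charged to it carries weight at most `n`: if it is light, because `(Δ + 1) λ ≤ d`;
if it is heavy, because the mixing bound then forces the fibres of its neighbours to be small.
So `|J| ≤ n |I| ≤ n · IS(G)`, while `I₀ × U` for a maximum independent set `I₀` of `G` gives
the reverse inequality.
-/

open Finset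

section Spectral

variable {U : Type*} [Fintype U]

def QuadBoundOnMeanZero (A : Matrix U U ℝ) (lam : ℝ) : Prop :=
  ∀ p : U → ℝ, ∑ i, p i = 0 → |p ⬝ᵥ (A *ᵥ p)| ≤ lam * ∑ i, p i ^ 2

theorem QuadBoundOnMeanZero.sq_dotProduct_mulVec_le {A : Matrix U U ℝ} {lam : ℝ}
    (hspec : QuadBoundOnMeanZero A lam) (hA : A.IsSymm) {x y : U → ℝ}
    (hx : ∑ i, x i = 0) (hy : ∑ i, y i = 0) :
    (x ⬝ᵥ A *ᵥ y) ^ 2 ≤ lam ^ 2 * (∑ i, x i ^ 2) * ∑ i, y i ^ 2 := by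
  have hyx : y ⬝ᵥ A *ᵥ x = x ⬝ᵥ A *ᵥ y := by
    rw [← dotProduct_transpose_mulVec, hA.eq]
  -- `t • x ± y` are mean-zero and their quadratic forms differ by `4 t xᵀAy`
  have hquad : ∀ t : ℝ, 0 ≤ (lam * ∑ i, x i ^ 2) * (t * t) + (-2 * (x ⬝ᵥ A *ᵥ y)) * t
      + lam * ∑ i, y i ^ 2 := by
    intro t
    have hmean : ∀ s : ℝ, ∑ i, (t • x + s • y) i = 0 := fun s => by
      simp [Finset.sum_add_distrib, ← Finset.mul_sum, hx, hy]
    have hp := abs_le.mp (hspec _ (hmean 1))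
    have hq := abs_le.mp (hspec _ (hmean (-1)))
    have hnorm : ∀ s : ℝ, ∑ i, (t • x + s • y) i ^ 2
        = t ^ 2 * ∑ i, x i ^ 2 + 2 * t * s * (x ⬝ᵥ y) + s ^ 2 * ∑ i, y i ^ 2 := fun s => by
      simp only [Pi.add_apply, Pi.smul_apply, smul_eq_mul, dotProduct, Finset.mul_sum,
        ← Finset.sum_add_distrib]
      exact Finset.sum_congr rfl fun i _ => by ring
    have hform : ∀ s : ℝ, (t • x + s • y) ⬝ᵥ A *ᵥ (t • x + s • y)
        = t ^ 2 * (x ⬝ᵥ A *ᵥ x) + 2 * t * s * (x ⬝ᵥ A *ᵥ y) + s ^ 2 * (y ⬝ᵥ A *ᵥ y) :=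
        fun s => by
      simp only [mulVec_add, mulVec_smul, add_dotProduct, dotProduct_add, smul_dotProduct,
        dotProduct_smul, smul_eq_mul, hyx]
      ring
    rw [hform, hnorm] at hp hq
    nlinarith
  have := discrim_le_zero hquad
  rw [discrim] at this
  nlinarith

end Spectral

section Mixing

variable {U : Type*} [Fintype U] [DecidableEq U]

def indicatorVec (S : Finset U) : U → ℝ := fun i => if i ∈ S then 1 else 0

def centeredIndicator (S : Finset U) : U → ℝ :=
  (Fintype.card U : ℝ) • indicatorVec S - (#S : ℝ) • 1

theorem sum_indicatorVec (S : Finset U) : ∑ i, indicatorVec S i = #S := by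
  simp [indicatorVec]

theorem sum_centeredIndicator (S : Finset U) : ∑ i, centeredIndicator S i = 0 := by
  simp [centeredIndicator, Finset.sum_sub_distrib, ← Finset.mul_sum, sum_indicatorVec]

theorem sum_sq_centeredIndicator (S : Finset U) :
    ∑ i, centeredIndicator S i ^ 2 = Fintype.card U * #S * (Fintype.card U - #S) := by
  have hsq : ∀ i, centeredIndicator S i ^ 2
      = (Fintype.card U : ℝ) * (Fintype.card U - 2 * #S) * indicatorVec S i + (#S : ℝ) ^ 2 := by
    intro i
    by_cases hi : i ∈ S
    · simp [centeredIndicator, indicatorVec, hi]; ring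
    · simp [centeredIndicator, indicatorVec, hi]
  simp only [hsq, Finset.sum_add_distrib, ← Finset.mul_sum, sum_indicatorVec, Finset.sum_const,
    card_univ, nsmul_eq_mul]
  ring

theorem indicatorVec_dotProduct_adjMatrix_mulVec_eq_zero (H : SimpleGraph U)
    [DecidableRel H.Adj] {S T : Finset U} (hST : ∀ u ∈ S, ∀ w ∈ T, ¬ H.Adj u w) :
    indicatorVec S ⬝ᵥ H.adjMatrix ℝ *ᵥ indicatorVec T = 0 := by
  rw [SimpleGraph.dotProduct_mulVec_adjMatrix]
  refine Finset.sum_eq_zero fun u _ => Finset.sum_eq_zero fun w _ => ?_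
  unfold indicatorVec
  split_ifs <;> simp_all

theorem centeredIndicator_dotProduct_adjMatrix_mulVec {H : SimpleGraph U} [DecidableRel H.Adj]
    {d : ℕ} (hreg : H.IsRegularOfDegree d) {S T : Finset U}
    (hST : ∀ u ∈ S, ∀ w ∈ T, ¬ H.Adj u w) :
    centeredIndicator S ⬝ᵥ H.adjMatrix ℝ *ᵥ centeredIndicator T
      = -(Fintype.card U * d * #S * #T) := by
  have hone : H.adjMatrix ℝ *ᵥ 1 = (d : ℝ) • 1 := by
    ext i
    simpa using SimpleGraph.adjMatrix_mulVec_const_apply_of_regular hreg (α := ℝ) (a := 1)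
      (v := i)
  have hsymm : (1 : U → ℝ) ⬝ᵥ H.adjMatrix ℝ *ᵥ indicatorVec T
      = indicatorVec T ⬝ᵥ H.adjMatrix ℝ *ᵥ 1 := by
    rw [← dotProduct_transpose_mulVec, SimpleGraph.transpose_adjMatrix]
  simp only [centeredIndicator, mulVec_sub, mulVec_smul, sub_dotProduct, dotProduct_sub,
    smul_dotProduct, dotProduct_smul, smul_eq_mul, hsymm, hone,
    indicatorVec_dotProduct_adjMatrix_mulVec_eq_zero H hST, dotProduct_one, Pi.sub_apply,
    Pi.smul_apply, Pi.one_apply, Finset.sum_sub_distrib, ← Finset.mul_sum, sum_indicatorVec,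
    sum_const, card_univ, nsmul_eq_mul]
  ring

theorem QuadBoundOnMeanZero.sq_mul_card_mul_card_le {H : SimpleGraph U} [DecidableRel H.Adj]
    {d : ℕ} (hreg : H.IsRegularOfDegree d) {lam : ℝ}
    (hspec : QuadBoundOnMeanZero (H.adjMatrix ℝ) lam)
    {S T : Finset U} (hST : ∀ u ∈ S, ∀ w ∈ T, ¬ H.Adj u w) :
    (d : ℝ) ^ 2 * #S * #T ≤ lam ^ 2 * (Fintype.card U - #S) * (Fintype.card U - #T) := by
  have hS : (#S : ℝ) ≤ Fintype.card U := by exact_mod_cast card_le_univ S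
  have hT : (#T : ℝ) ≤ Fintype.card U := by exact_mod_cast card_le_univ T
  have hrhs : 0 ≤ lam ^ 2 * (Fintype.card U - #S) * (Fintype.card U - #T) :=
    mul_nonneg (mul_nonneg (sq_nonneg _) (sub_nonneg.2 hS)) (sub_nonneg.2 hT)
  rcases eq_or_ne ((#S : ℝ) * #T) 0 with h0 | h0
  · calc (d : ℝ) ^ 2 * #S * #T = d ^ 2 * (#S * #T) := by ring
      _ ≤ _ := by rwa [h0, mul_zero]
  have hs : (0 : ℝ) < #S := (Nat.cast_nonneg _).lt_of_ne (left_ne_zero_of_mul h0).symm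
  have hn : (0 : ℝ) < Fintype.card U := hs.trans_le hS
  -- `(n d |S| |T|)² ≤ λ² · n |S| (n - |S|) · n |T| (n - |T|)`
  have := hspec.sq_dotProduct_mulVec_le (SimpleGraph.isSymm_adjMatrix H)
    (sum_centeredIndicator S) (sum_centeredIndicator T)
  rw [centeredIndicator_dotProduct_adjMatrix_mulVec hreg hST, sum_sq_centeredIndicator,
    sum_sq_centeredIndicator] at this
  have hst : (0 : ℝ) < #S * #T := (by positivity : (0 : ℝ) ≤ #S * #T).lt_of_ne h0.symm
  have hpos : 0 < (Fintype.card U : ℝ) ^ 2 * (#S * #T) := by positivity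
  refine le_of_mul_le_mul_left ?_ hpos
  nlinarith

end Mixing

section Threshold

variable {ι : Type*} {d lam n : ℝ} {Δ : ℕ} {F : Finset ι} {a : ℝ} {b : ι → ℝ}

theorem add_sum_le_of_le_div (hF : #F ≤ Δ) (hlam : 0 < lam) (hd : (Δ + 1) * lam ≤ d)
    (hn : 0 ≤ n) (ha : a ≤ lam * n / d) (hb : ∀ i ∈ F, b i ≤ lam * n / d) :
    a + ∑ i ∈ F, b i ≤ n := by
  have hd0 : 0 < d := by nlinarith
  have hsum : ∑ i ∈ F, b i ≤ Δ * (lam * n / d) :=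
    calc ∑ i ∈ F, b i ≤ #F * (lam * n / d) := by simpa using Finset.sum_le_card_nsmul F b _ hb
      _ ≤ Δ * (lam * n / d) := by gcongr
  have hτn : (Δ + 1) * (lam * n / d) ≤ n := by
    rw [← mul_div_assoc, div_le_iff₀ hd0]
    nlinarith
  linarith

theorem add_sum_le_of_div_lt (hF : #F ≤ Δ) (hlam : 0 ≤ lam) (hd0 : 0 < d) (hd : Δ * lam ≤ d)
    (hn : 0 ≤ n) (han : a ≤ n) (ha : lam * n / d < a) (hb : ∀ i ∈ F, 0 ≤ b i)
    (hab : ∀ i ∈ F, d ^ 2 * a * b i ≤ lam ^ 2 * (n - a) * (n - b i)) :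
    a + ∑ i ∈ F, b i ≤ n := by
  have hlamn : lam * n < d * a := by rwa [div_lt_iff₀ hd0, mul_comm a] at ha
  have ha0 : 0 < a := by nlinarith [mul_nonneg hlam hn]
  have hba : ∀ i ∈ F, d ^ 2 * a * b i ≤ lam ^ 2 * (n - a) * n := fun i hi => by
    nlinarith [hab i hi, hb i hi, mul_nonneg (sq_nonneg lam) (sub_nonneg.2 han)]
  have hΔ : Δ * lam ^ 2 * n ≤ d ^ 2 * a :=
    calc Δ * lam ^ 2 * n = Δ * lam * (lam * n) := by ring
      _ ≤ Δ * lam * (d * a) := by gcongr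
      _ ≤ d * (d * a) := by gcongr
      _ = d ^ 2 * a := by ring
  have hsum : d ^ 2 * a * ∑ i ∈ F, b i ≤ d ^ 2 * a * (n - a) :=
    calc d ^ 2 * a * ∑ i ∈ F, b i ≤ #F * (lam ^ 2 * (n - a) * n) := by
          simpa [Finset.mul_sum] using Finset.sum_le_card_nsmul F _ _ hba
      _ ≤ Δ * (lam ^ 2 * (n - a) * n) := by
          have : 0 ≤ n - a := sub_nonneg.2 han
          gcongr
      _ ≤ d ^ 2 * a * (n - a) := by nlinarith [sub_nonneg.2 han]
  have := le_of_mul_le_mul_left hsum (by positivity)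
  linarith

end Threshold

theorem Finset.sum_le_card_mul_of_add_sum_fiber_le {V : Type*} [Fintype V] [DecidableEq V]
    {I : Finset V} {π : V → V} (hπ : ∀ w ∉ I, π w ∈ I) {f : V → ℝ} {c : ℝ}
    (h : ∀ v ∈ I, f v + ∑ w ∈ Iᶜ with π w = v, f w ≤ c) :
    ∑ v, f v ≤ #I * c := by
  rw [← Finset.sum_add_sum_compl I,
    ← Finset.sum_fiberwise_of_maps_to (fun w hw => hπ w (Finset.mem_compl.1 hw)),
    ← Finset.sum_add_distrib]
  simpa using Finset.sum_le_sum h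

section IndepSet

variable {V : Type*} {G : SimpleGraph V}

theorem isIndepSet_empty : IsIndepSet G ∅ := fun u hu => absurd hu (notMem_empty u)

theorem IsIndepSet.insert [DecidableEq V] {I : Finset V} {w : V} (hI : IsIndepSet G I)
    (hw : ∀ v ∈ I, ¬ G.Adj w v) : IsIndepSet G (insert w I) := by
  intro u hu v hv huv
  rw [Finset.mem_insert] at hu hv
  rcases hu with rfl | hu <;> rcases hv with rfl | hv
  · exact G.loopless.irrefl _ huv
  · exact hw v hv huv
  · exact hw u hu huv.symm
  · exact hI u hu v hv huv

theorem IsIndepSet.product_univ {U : Type*} [Fintype U] {H : SimpleGraph U} {I : Finset V}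
    (hI : IsIndepSet G I) : IsIndepSet (tensorProd G H) (I ×ˢ univ) :=
  fun _ hu _ hv huv => hI _ (Finset.mem_product.1 hu).1 _ (Finset.mem_product.1 hv).1 huv.1

variable [Fintype V]

theorem IsIndepSet.exists_superset_forall_exists_adj [DecidableEq V] {B : Finset V}
    (hB : IsIndepSet G B) :
    ∃ I, B ⊆ I ∧ IsIndepSet G I ∧ ∀ w ∉ I, ∃ v ∈ I, G.Adj w v := by
  obtain ⟨I, hBI, hI, hmax⟩ := exists_maximal_ge_of_wellFoundedGT (IsIndepSet G) B hB
  refine ⟨I, hBI, hI, fun w hw => ?_⟩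
  by_contra! hnadj
  exact hw (hmax (hI.insert hnadj) (Finset.subset_insert w I) (Finset.mem_insert_self w I))

variable (G)

theorem bddAbove_card_isIndepSet : BddAbove {k | ∃ I : Finset V, IsIndepSet G I ∧ #I = k} :=
  ⟨Fintype.card V, by rintro _ ⟨I, -, rfl⟩; exact card_le_univ I⟩

theorem exists_isIndepSet_card_eq_indepNum : ∃ I, IsIndepSet G I ∧ #I = indepNum V G :=
  Nat.sSup_mem (s := {k | ∃ I : Finset V, IsIndepSet G I ∧ #I = k})
    ⟨0, ∅, isIndepSet_empty, rfl⟩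
    (bddAbove_card_isIndepSet G)

variable {G}

theorem IsIndepSet.card_le_indepNum {I : Finset V} (hI : IsIndepSet G I) :
    #I ≤ indepNum V G :=
  le_csSup (bddAbove_card_isIndepSet G) ⟨I, hI, rfl⟩

variable (G) in
theorem card_mul_indepNum_le_indepNum_tensorProd {U : Type*} [Fintype U] (H : SimpleGraph U) :
    Fintype.card U * indepNum V G ≤ indepNum (V × U) (tensorProd G H) := by
  obtain ⟨I, hI, hIcard⟩ := exists_isIndepSet_card_eq_indepNum G
  simpa [← hIcard, mul_comm] using (hI.product_univ (H := H)).card_le_indepNum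

end IndepSet

section Fiber

variable {V U : Type*} [Fintype U] [DecidableEq V] [DecidableEq U]

def fiber (J : Finset (V × U)) (v : V) : Finset U := {u | (v, u) ∈ J}

theorem card_eq_sum_card_fiber [Fintype V] (J : Finset (V × U)) : #J = ∑ v, #(fiber J v) := by
  simp only [fiber, Finset.card_filter, ← Fintype.sum_prod_type']
  simp

theorem IsIndepSet.fiber_not_adj {G : SimpleGraph V} {H : SimpleGraph U} {J : Finset (V × U)}
    (hJ : IsIndepSet (tensorProd G H) J) {v w : V} (hvw : G.Adj v w) :
    ∀ u ∈ fiber J v, ∀ u' ∈ fiber J w, ¬ H.Adj u u' := fun _ hu _ hu' huu' =>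
  hJ _ (Finset.mem_filter.1 hu).2 _ (Finset.mem_filter.1 hu').2 ⟨hvw, huu'⟩

end Fiber

section Weighting

variable {V : Type*} [Fintype V] {G : SimpleGraph V} {d lam n : ℝ} {f : V → ℝ}

theorem isIndepSet_filter_div_lt (hlam : 0 ≤ lam) (hd0 : 0 < d) (hn : 0 ≤ n)
    (hf0 : ∀ v, 0 ≤ f v) (hfn : ∀ v, f v ≤ n)
    (hadj : ∀ v w, G.Adj v w → d ^ 2 * f v * f w ≤ lam ^ 2 * (n - f v) * (n - f w)) :
    IsIndepSet G {v | lam * n / d < f v} := by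
  intro v hv w hw hvw
  have hv : lam * n < d * f v := by
    rw [← div_lt_iff₀' hd0]; exact (Finset.mem_filter.1 hv).2
  have hw : lam * n < d * f w := by
    rw [← div_lt_iff₀' hd0]; exact (Finset.mem_filter.1 hw).2
  have hlamn : 0 ≤ lam * n := mul_nonneg hlam hn
  have hfar : lam ^ 2 * (n - f v) * (n - f w) ≤ (lam * n) * (lam * n) := by
    have := mul_le_mul (sub_le_self n (hf0 v)) (sub_le_self n (hf0 w)) (sub_nonneg.2 (hfn w)) hn
    nlinarith [sq_nonneg lam]
  nlinarith [hadj v w hvw, mul_lt_mul'' hv hw hlamn hlamn]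

theorem sum_le_mul_indepNum [DecidableEq V] [DecidableRel G.Adj] {Δ : ℕ}
    (hdeg : ∀ v, G.degree v ≤ Δ) (hlam : 0 < lam) (hd : (Δ + 1) * lam ≤ d) (hn : 0 ≤ n)
    (hf0 : ∀ v, 0 ≤ f v) (hfn : ∀ v, f v ≤ n)
    (hadj : ∀ v w, G.Adj v w → d ^ 2 * f v * f w ≤ lam ^ 2 * (n - f v) * (n - f w)) :
    ∑ v, f v ≤ n * indepNum V G := by
  have hd0 : 0 < d := by nlinarith
  obtain ⟨I, hBI, hI, hdom⟩ :=
    (isIndepSet_filter_div_lt hlam.le hd0 hn hf0 hfn hadj).exists_superset_forall_exists_adj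
  choose! π hπI hπadj using hdom
  have hlight : ∀ w ∉ I, f w ≤ lam * n / d := fun w hw => by
    by_contra! h
    exact hw (hBI (Finset.mem_filter.2 ⟨Finset.mem_univ w, h⟩))
  have hfiber : ∀ v ∈ I, f v + ∑ w ∈ Iᶜ with π w = v, f w ≤ n := fun v _ => by
    set F := Iᶜ.filter (π · = v)
    have hFI : ∀ w ∈ F, w ∉ I ∧ π w = v := fun w hw => by
      simpa [F] using hw
    have hF : #F ≤ Δ := by
      refine (Finset.card_le_card fun w hw => ?_).trans
        ((G.card_neighborFinset_eq_degree v).trans_le (hdeg v))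
      obtain ⟨hwI, rfl⟩ := hFI w hw
      exact (G.mem_neighborFinset _ w).2 (hπadj w hwI).symm
    rcases le_or_gt (f v) (lam * n / d) with hsmall | hbig
    · exact add_sum_le_of_le_div hF hlam hd hn hsmall fun w hw => hlight w (hFI w hw).1
    · refine add_sum_le_of_div_lt hF hlam.le hd0 (by linarith) hn (hfn v) hbig (fun w _ => hf0 w)
        fun w hw => ?_
      obtain ⟨hwI, rfl⟩ := hFI w hw
      exact hadj _ w (hπadj w hwI).symm
  calc ∑ v, f v ≤ #I * n := Finset.sum_le_card_mul_of_add_sum_fiber_le hπI hfiber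
    _ ≤ n * indepNum V G := by
      rw [mul_comm]; gcongr; exact_mod_cast hI.card_le_indepNum

end Weighting

theorem indepNum_tensorProd_eq_general {V U : Type*} [Fintype V] [Fintype U]
    (G : SimpleGraph V) [DecidableRel G.Adj]
    (Δ : ℕ) (hΔ1 : 1 ≤ Δ) (hdeg : ∀ v, G.degree v ≤ Δ)
    (H : SimpleGraph U) [DecidableRel H.Adj]
    (d : ℕ) (hreg : H.IsRegularOfDegree d) (lam : ℝ)
    (hspec : ∀ p : U → ℝ, ∑ i, p i = 0 →
      abs (p ⬝ᵥ (H.adjMatrix ℝ *ᵥ p)) ≤ lam * ∑ i, (p i) ^ 2)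
    (hlam0 : 0 < lam)
    (hd : 2 * lam * (Δ : ℝ) ≤ (d : ℝ)) :
    indepNum (V × U) (tensorProd G H) = Fintype.card U * indepNum V G := by
  classical
  refine le_antisymm ?_ (card_mul_indepNum_le_indepNum_tensorProd G H)
  obtain ⟨J, hJ, hJcard⟩ := exists_isIndepSet_card_eq_indepNum (tensorProd G H)
  have hd' : ((Δ : ℝ) + 1) * lam ≤ d := by
    nlinarith [(Nat.one_le_cast (α := ℝ)).2 hΔ1]
  have key := sum_le_mul_indepNum (f := fun v => (#(fiber J v) : ℝ)) hdeg hlam0 hd'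
    (Nat.cast_nonneg _) (fun _ => Nat.cast_nonneg _) (fun _ => by exact_mod_cast card_le_univ _)
    fun v w hvw => QuadBoundOnMeanZero.sq_mul_card_mul_card_le hreg hspec (hJ.fiber_not_adj hvw)
  rw [← hJcard]
  exact_mod_cast (card_eq_sum_card_fiber J).trans_le (by exact_mod_cast key)

/-- Let `G` have maximum degree at most `Δ ≥ 1` and let `H` be a `d`-regular `(n,d,λ)`-graph
with `0 < λ < d/4` and `d ≥ 2λΔ`.  Then `IS(G ⊗ H) = n · IS(G)` (equivalently,
`rel-IS(G ⊗ H) = rel-IS(G)`). -/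
theorem indepNum_tensorProd_eq {V U : Type*} [Fintype V] [Fintype U]
    [DecidableEq V] [DecidableEq U]
    (G : SimpleGraph V) [DecidableRel G.Adj]
    (Δ : ℕ) (hΔ1 : 1 ≤ Δ) (hdeg : ∀ v, G.degree v ≤ Δ)
    (H : SimpleGraph U) [DecidableRel H.Adj]
    (d : ℕ) (hreg : H.IsRegularOfDegree d) (lam : ℝ)
    (hspec : ∀ p : U → ℝ, ∑ i, p i = 0 →
      abs (p ⬝ᵥ (H.adjMatrix ℝ *ᵥ p)) ≤ lam * ∑ i, (p i) ^ 2)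
    (hlam0 : 0 < lam) (hlam : lam < (d : ℝ) / 4)
    (hd : 2 * lam * (Δ : ℝ) ≤ (d : ℝ)) :
    indepNum (V × U) (tensorProd G H) = Fintype.card U * indepNum V G :=
  indepNum_tensorProd_eq_general G Δ hΔ1 hdeg H d hreg lam hspec hlam0 hd
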